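/- Let ρ ∈ ℝ and let q : ℝ×ℝ → ℂ be a smooth solution of the nonlocal equation (E). Then the first conservation law ∂ₜ( q Λ₁ ) = ∂ₓ[ (−q_{xx} − 3i q q̃ q_x + (3/2) q³ q̃² − 2ρ q² q̃ − 4ρ² q) Λ₁ + (2i q_x − 2 q² q̃ − 4ρ q) Λ₃ + 4 q Λ₅ ] holds at every (x,t) ∈ ℝ². -/

import Mathlib

open Complex

/-- Partial derivative in the space variable `x` (first coordinate). -/
noncomputable def pdx (f : ℝ × ℝ → ℂ) : ℝ × ℝ → ℂ :=
  fun p => deriv (fun x => f (x, p.2)) p.1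

/-- Partial derivative in the time variable `t` (second coordinate). -/
noncomputable def pdt (f : ℝ × ℝ → ℂ) : ℝ × ℝ → ℂ :=
  fun p => deriv (fun t => f (p.1, t)) p.2

/-- The reverse space-time reflection `q̃(x,t) = q(-x,-t)`. -/
def tq (q : ℝ × ℝ → ℂ) : ℝ × ℝ → ℂ := fun p => q (-p.1, -p.2)

/-- `q̂₁(x,t) = (∂ₓq)(-x,-t)`. -/
noncomputable def hq1 (q : ℝ × ℝ → ℂ) : ℝ × ℝ → ℂ := fun p => pdx q (-p.1, -p.2)

/-- `q̂₂(x,t) = (∂ₓ²q)(-x,-t)`. -/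
noncomputable def hq2 (q : ℝ × ℝ → ℂ) : ℝ × ℝ → ℂ := fun p => pdx (pdx q) (-p.1, -p.2)

/-- The reverse space-time nonlocal equation (E) at a single point. -/
noncomputable def NonlocalEAt (q : ℝ × ℝ → ℂ) (ρ : ℝ) (p : ℝ × ℝ) : Prop :=
  I * pdt q p + I * pdx (pdx (pdx q)) p
    - 3 * pdx (fun p' => q p' * tq q p' * pdx q p' + (I / 2) * (q p') ^ 3 * (tq q p') ^ 2) p
    + (ρ : ℂ) * (2 * pdx (pdx q) p - 3 * (q p) ^ 3 * (tq q p) ^ 2)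
    + (ρ : ℂ) * (-2 * I * (q p) ^ 2 * hq1 q p + 10 * I * q p * tq q p * pdx q p)
    + (ρ : ℂ) ^ 2 * (4 * (q p) ^ 2 * tq q p + 4 * I * pdx q p - 8 * q p)
    + 8 * (ρ : ℂ) ^ 3 * q p = 0

/-- The reverse space-time nonlocal equation (E). -/
noncomputable def NonlocalE (q : ℝ × ℝ → ℂ) (ρ : ℝ) : Prop :=
  ∀ p : ℝ × ℝ, NonlocalEAt q ρ p

/-- The conserved-density coefficient `Λ₁`. -/
noncomputable def L1 (q : ℝ × ℝ → ℂ) : ℝ × ℝ → ℂ := fun p => -(I / 2) * tq q p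

/-- The conserved-density coefficient `Λ₃`. -/
noncomputable def L3 (q : ℝ × ℝ → ℂ) (ρ : ℝ) : ℝ × ℝ → ℂ := fun p =>
  (I / 8) * q p * (tq q p) ^ 2 - (I / 2) * (ρ : ℂ) * tq q p + (1 / 4) * hq1 q p

/-- The conserved-density coefficient `Λ₅`. -/
noncomputable def L5 (q : ℝ × ℝ → ℂ) (ρ : ℝ) : ℝ × ℝ → ℂ := fun p =>
  -(I / 16) * (q p) ^ 2 * (tq q p) ^ 3 - (1 / 4) * q p * tq q p * hq1 q p
    + (1 / 16) * pdx q p * (tq q p) ^ 2 + (3 * I / 8) * (ρ : ℂ) * q p * (tq q p) ^ 2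
    + ((ρ : ℂ) / 2) * hq1 q p - (I / 2) * (ρ : ℂ) ^ 2 * tq q p + (I / 8) * hq2 q p

lemma slice_x (f : ℝ × ℝ → ℂ) (hf : Differentiable ℝ f) (x t : ℝ) :
    HasDerivAt (fun x' => f (x', t)) (pdx f (x, t)) x := by
  have h : DifferentiableAt ℝ (fun x' => f (x', t)) x :=
    (hf (x, t)).comp x (differentiableAt_id.prodMk (differentiableAt_const t))
  exact h.hasDerivAt

lemma slice_t (f : ℝ × ℝ → ℂ) (hf : Differentiable ℝ f) (x t : ℝ) :
    HasDerivAt (fun t' => f (x, t')) (pdt f (x, t)) t := by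
  have h : DifferentiableAt ℝ (fun t' => f (x, t')) t :=
    (hf (x, t)).comp t ((differentiableAt_const x).prodMk differentiableAt_id)
  exact h.hasDerivAt

lemma tq_x (f : ℝ × ℝ → ℂ) (hf : Differentiable ℝ f) (x t : ℝ) :
    HasDerivAt (fun x' => tq f (x', t)) (-hq1 f (x, t)) x := by
  have h := HasDerivAt.scomp_of_eq _ (slice_x f hf (-x) (-t)) (hasDerivAt_neg x) rfl
  simpa [tq, hq1, Function.comp_def] using h

lemma tq_t (f : ℝ × ℝ → ℂ) (hf : Differentiable ℝ f) (x t : ℝ) :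
    HasDerivAt (fun t' => tq f (x, t')) (-(pdt f (-x, -t))) t := by
  have h := HasDerivAt.scomp_of_eq _ (slice_t f hf (-x) (-t)) (hasDerivAt_neg t) rfl
  simpa [tq, Function.comp_def] using h

lemma hq1_x (f : ℝ × ℝ → ℂ) (hf1 : Differentiable ℝ (pdx f)) (x t : ℝ) :
    HasDerivAt (fun x' => hq1 f (x', t)) (-hq2 f (x, t)) x := by
  have h := HasDerivAt.scomp_of_eq _ (slice_x (pdx f) hf1 (-x) (-t)) (hasDerivAt_neg x) rfl
  simpa [hq1, hq2, Function.comp_def] using h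

lemma hq2_x (f : ℝ × ℝ → ℂ) (hf2 : Differentiable ℝ (pdx (pdx f))) (x t : ℝ) :
    HasDerivAt (fun x' => hq2 f (x', t)) (-(pdx (pdx (pdx f)) (-x, -t))) x := by
  have h := HasDerivAt.scomp_of_eq _ (slice_x (pdx (pdx f)) hf2 (-x) (-t)) (hasDerivAt_neg x) rfl
  simpa [hq2, Function.comp_def] using h

lemma contDiff_pdx (f : ℝ × ℝ → ℂ) (hf : ContDiff ℝ (⊤ : ℕ∞) f) : ContDiff ℝ (⊤ : ℕ∞) (pdx f) := by
  have h1 : pdx f = fun p => fderiv ℝ f p (1, 0) := by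
    funext p
    have h0 : HasDerivAt (fun x' : ℝ => (x', p.2)) ((1 : ℝ), (0 : ℝ)) p.1 :=
      (hasDerivAt_id p.1).prodMk (hasDerivAt_const p.1 p.2)
    have hD : HasDerivAt (fun x' => f (x', p.2)) (fderiv ℝ f p (1, 0)) p.1 := by
      have := ((hf.differentiable (by simp)) p).hasFDerivAt.comp_hasDerivAt p.1 h0
      simpa [Function.comp_def] using this
    exact hD.deriv
  rw [h1]
  exact (hf.fderiv_right (by simp)).clm_apply contDiff_const

lemma HasDerivAt.cpow2 {f : ℝ → ℂ} {f' : ℂ} {x : ℝ} (h : HasDerivAt f f' x) :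
    HasDerivAt (fun y => f y ^ 2) (2 * f x * f') x := by
  rw [show (fun y => f y ^ 2) = fun y => f y * f y from by funext y; ring]
  exact (h.mul h).congr_deriv (by ring)

lemma HasDerivAt.cpow3 {f : ℝ → ℂ} {f' : ℂ} {x : ℝ} (h : HasDerivAt f f' x) :
    HasDerivAt (fun y => f y ^ 3) (3 * f x ^ 2 * f') x := by
  rw [show (fun y => f y ^ 3) = fun y => f y * f y * f y from by funext y; ring]
  exact ((h.mul h).mul h).congr_deriv (by simp only [Pi.mul_apply]; ring)

/-- the first conservation law of the nonlocal equation (E). -/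
theorem first_conservation_law
    (ρ : ℝ) (q : ℝ × ℝ → ℂ) (hq : ContDiff ℝ (⊤ : ℕ∞) q) (hE : NonlocalE q ρ) :
    ∀ p : ℝ × ℝ,
      pdt (fun p' => q p' * L1 q p') p
        = pdx (fun p' =>
            (-pdx (pdx q) p' - 3 * I * q p' * tq q p' * pdx q p'
                + (3 / 2) * (q p') ^ 3 * (tq q p') ^ 2
                - 2 * (ρ : ℂ) * (q p') ^ 2 * tq q p' - 4 * (ρ : ℂ) ^ 2 * q p') * L1 q p'
            + (2 * I * pdx q p' - 2 * (q p') ^ 2 * tq q p' - 4 * (ρ : ℂ) * q p') * L3 q ρ p'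
            + 4 * q p' * L5 q ρ p') p := by

  have hdq : Differentiable ℝ q := hq.differentiable (by simp)
  have hdq1 : Differentiable ℝ (pdx q) := (contDiff_pdx q hq).differentiable (by simp)
  have hdq2 : Differentiable ℝ (pdx (pdx q)) :=
    (contDiff_pdx (pdx q) (contDiff_pdx q hq)).differentiable (by simp)
  rintro ⟨x, t⟩
  -- base derivatives at (x, t)
  have hA := slice_x q hdq x t
  have hB := tq_x q hdq x t
  have hA1 := slice_x (pdx q) hdq1 x t
  have hB1 := hq1_x q hdq1 x t
  have hA2 := slice_x (pdx (pdx q)) hdq2 x t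
  have hB2 := hq2_x q hdq2 x t
  have hAt := slice_t q hdq x t
  have hBt := tq_t q hdq x t
  -- base derivatives at (-x, -t)
  have hA' := slice_x q hdq (-x) (-t)
  have hB' := tq_x q hdq (-x) (-t)
  have hA1' := slice_x (pdx q) hdq1 (-x) (-t)
  -- the compound derivative inside the equation, at (x,t) and (-x,-t)
  have hPp := ((hA.mul hB).mul hA1).add
    (((hA.cpow3).const_mul (I / 2)).mul (hB.cpow2))
  have hPm := ((hA'.mul hB').mul hA1').add
    (((hA'.cpow3).const_mul (I / 2)).mul (hB'.cpow2))
  have hDp : pdx (fun p' => q p' * tq q p' * pdx q p'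
      + (I / 2) * (q p') ^ 3 * (tq q p') ^ 2) (x, t) = _ := hPp.deriv
  have hDm : pdx (fun p' => q p' * tq q p' * pdx q p'
      + (I / 2) * (q p') ^ 3 * (tq q p') ^ 2) (-x, -t) = _ := hPm.deriv
  have ep0 := hE (x, t)
  have em0 := hE (-x, -t)
  simp only [NonlocalEAt] at ep0 em0
  rw [hDp] at ep0
  rw [hDm] at em0
  -- left-hand side derivative
  have HL := hAt.mul (hBt.const_mul (-(I / 2)))
  -- right-hand side derivative
  have bracket1 := (((hA2.neg.sub (((hA.const_mul (3 * I)).mul hB).mul hA1)).add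
      (((hA.cpow3).const_mul ((3 : ℂ) / 2)).mul (hB.cpow2))).sub
      (((hA.cpow2).const_mul (2 * (ρ : ℂ))).mul hB)).sub
      (hA.const_mul (4 * (ρ : ℂ) ^ 2))
  have term1 := bracket1.mul (hB.const_mul (-(I / 2)))
  have bracket2 := ((hA1.const_mul (2 * I)).sub
      (((hA.cpow2).const_mul (2 : ℂ)).mul hB)).sub (hA.const_mul (4 * (ρ : ℂ)))
  have hL3 := (((hA.const_mul (I / 8)).mul (hB.cpow2)).sub
      (hB.const_mul (I / 2 * (ρ : ℂ)))).add (hB1.const_mul ((1 : ℂ) / 4))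
  have term2 := bracket2.mul hL3
  have u1 := ((hA.cpow2).const_mul (-(I / 16))).mul (hB.cpow3)
  have u2 := ((hA.const_mul ((1 : ℂ) / 4)).mul hB).mul hB1
  have u3 := (hA1.const_mul ((1 : ℂ) / 16)).mul (hB.cpow2)
  have u4 := (hA.const_mul (3 * I / 8 * (ρ : ℂ))).mul (hB.cpow2)
  have u5 := hB1.const_mul ((ρ : ℂ) / 2)
  have u6 := hB.const_mul (I / 2 * (ρ : ℂ) ^ 2)
  have u7 := hB2.const_mul (I / 8)
  have hL5 := (((((u1.sub u2).add u3).add u4).add u5).sub u6).add u7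
  have HG := (term1.add term2).add ((hA.const_mul (4 : ℂ)).mul hL5)
  refine HL.deriv.trans (Eq.trans ?_ HG.deriv.symm)
  simp only [tq, hq1, hq2, neg_neg, Pi.mul_apply, Pi.add_apply, Pi.sub_apply, Pi.neg_apply] at ep0 em0 ⊢
  linear_combination (-(q (-x, -t)) / 2) * ep0 + (q (x, t) / 2) * em0
    + (q (-x, -t) * q (x, t) * pdx q (x, t) * pdx q (-x, -t) * (7 / 2)
      + q (-x, -t) * pdx (pdx q) (x, t) * (ρ : ℂ)
      - q (-x, -t) ^ 2 * q (x, t) * pdx (pdx q) (x, t) * (7 / 4)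
      - q (-x, -t) ^ 2 * pdx q (x, t) ^ 2 * (7 / 4)
      - pdx q (x, t) * pdx q (-x, -t) * (ρ : ℂ)) * Complex.I_sq
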